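/- arXiv:2006.02119 — 3 statements merged into one kernel-verified Lean document; each statement's English description precedes it below -/
import Mathlib

section
/- (Weissman et al. concentration inequality.) Let Q be a probability distribution on the finite set [S] = {1,…,S}, let X₁, X₂, …, Xₙ be independent and identically distributed random variables with distribution Q, and define the empirical distribution Q̂ₙ by Q̂ₙ(s) = (1/n)·Σ_{t=1}^n 1{X_t = s} for each s ∈ [S]. Then for any δ > 0, P( ‖Q̂ₙ − Q‖₁ ≥ √(2S·log(2/δ)/n) ) ≤ δ. -/
open MeasureTheory ProbabilityTheory Finset Real

/-! For a fixed sign vector `σ ∈ {±1}^S`, the pairing `⟨σ, Q̂ₙ - Q⟩` is the average of the `n`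
independent variables `σ(X_t) - E σ(X_t)` with `σ(X_t) ∈ [-1, 1]`, so Hoeffding's inequality
bounds the probability that it exceeds `ε` by `exp(-nε²/2)`. Since `‖v‖₁ = max_σ ⟨σ, v⟩`, a union
bound over the `2^S` sign vectors bounds the tail of `‖Q̂ₙ - Q‖₁` by `2^S exp(-nε²/2)`, which for
the chosen `ε` equals `δ^S ≤ δ`. -/

lemma measureReal_sum_sub_integral_ge_le_of_abs_le_one {Ω ι : Type*} [MeasurableSpace Ω]
    {μ : Measure Ω} [IsProbabilityMeasure μ] [Fintype ι] {Y : ι → Ω → ℝ}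
    (hY : ∀ i, Measurable (Y i)) (hindep : iIndepFun Y μ) (hbound : ∀ i ω, |Y i ω| ≤ 1)
    {ε : ℝ} (hε : 0 ≤ ε) :
    μ.real {ω | ε ≤ ∑ i, (Y i ω - μ[Y i])} ≤ exp (-ε ^ 2 / (2 * Fintype.card ι)) := by
  have hsubG : ∀ i ∈ (univ : Finset ι), HasSubgaussianMGF (fun ω ↦ Y i ω - μ[Y i]) 1 μ := by
    intro i _
    convert hasSubgaussianMGF_of_mem_Icc (hY i).aemeasurable
      (ae_of_all μ fun ω ↦ abs_le.1 (hbound i ω))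
    norm_num
  have hcentered : iIndepFun (fun i ω ↦ Y i ω - μ[Y i]) μ :=
    hindep.comp (fun i x ↦ x - ∫ ω, Y i ω ∂μ) fun i ↦ measurable_id.sub_const _
  simpa using HasSubgaussianMGF.measure_sum_ge_le_of_iIndepFun hcentered hsubG hε

lemma exists_sum_abs_eq_sum_sign_mul {α R : Type*} [Fintype α] [Ring R] [LinearOrder R]
    [IsStrictOrderedRing R] (v : α → R) :
    ∃ σ : α → Bool, ∑ s, |v s| = ∑ s, (if σ s then 1 else -1) * v s := by
  refine ⟨fun s ↦ decide (0 ≤ v s), sum_congr rfl fun s _ ↦ ?_⟩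
  by_cases h : 0 ≤ v s
  · simp [h, abs_of_nonneg h]
  · simp [h, abs_of_neg (not_le.1 h)]

lemma two_pow_mul_exp_neg_mul_sq_sqrt_le {S n : ℕ} (hS : 1 ≤ S) (hn : 0 < n) {δ : ℝ}
    (hδ : 0 < δ) (hδ1 : δ ≤ 1) :
    2 ^ S * exp (-(n * sqrt (2 * S * log (2 / δ) / n) ^ 2) / 2) ≤ δ := by
  have hlog : 0 ≤ log (2 / δ) := log_nonneg (by rw [le_div_iff₀ hδ]; linarith)
  have hexponent : -(n * sqrt (2 * S * log (2 / δ) / n) ^ 2) / 2 = S * log (δ / 2) := by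
    rw [sq_sqrt (by positivity), ← inv_div 2 δ, log_inv]
    field_simp
  calc 2 ^ S * exp (-(n * sqrt (2 * S * log (2 / δ) / n) ^ 2) / 2)
      = δ ^ S := by
        rw [hexponent, exp_nat_mul, exp_log (by positivity), ← mul_pow]
        field_simp
    _ ≤ δ := pow_le_of_le_one hδ.le hδ1 (by omega)

lemma integral_comp_eq_sum_of_map_eq {Ω α : Type*} [MeasurableSpace Ω] [MeasurableSpace α]
    [MeasurableSingletonClass α] [Fintype α] {μ : Measure Ω} {Q : Measure α} [IsFiniteMeasure Q]
    {Z : Ω → α} (hZ : Measurable Z) (hdist : μ.map Z = Q) (f : α → ℝ) :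
    ∫ ω, f (Z ω) ∂μ = ∑ s, f s * Q.real {s} := by
  rw [← integral_map hZ.aemeasurable (measurable_of_finite f).aestronglyMeasurable, hdist,
    integral_fintype .of_finite]
  simp [mul_comm]

section Empirical

variable {Ω α : Type*} [Fintype α] [DecidableEq α] {n : ℕ}

noncomputable def empiricalFreq (X : Fin n → Ω → α) (ω : Ω) (s : α) : ℝ :=
  (∑ i, if X i ω = s then (1 : ℝ) else 0) / n

lemma sum_mul_empiricalFreq (X : Fin n → Ω → α) (ω : Ω) (f : α → ℝ) :
    ∑ s, f s * empiricalFreq X ω s = (∑ i, f (X i ω)) / n := by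
  simp_rw [empiricalFreq, mul_div_assoc', ← sum_div, mul_sum, mul_ite, mul_one, mul_zero]
  rw [sum_comm]
  simp

variable [MeasurableSpace Ω] [MeasurableSpace α] [MeasurableSingletonClass α]
  {μ : Measure Ω} [IsProbabilityMeasure μ] {Q : Measure α} [IsProbabilityMeasure Q]
  {X : Fin n → Ω → α}

lemma measure_sum_mul_empiricalFreq_sub_ge_le (hn : 0 < n) (hX : ∀ i, Measurable (X i))
    (hindep : iIndepFun X μ) (hdist : ∀ i, μ.map (X i) = Q) {f : α → ℝ} (hf : ∀ s, |f s| ≤ 1)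
    {ε : ℝ} (hε : 0 ≤ ε) :
    μ {ω | ε ≤ ∑ s, f s * (empiricalFreq X ω s - Q.real {s})} ≤
      ENNReal.ofReal (exp (-(n * ε ^ 2) / 2)) := by
  have hn' : (0 : ℝ) < n := by exact_mod_cast hn
  have hevent : {ω | ε ≤ ∑ s, f s * (empiricalFreq X ω s - Q.real {s})} =
      {ω | n * ε ≤ ∑ i, (f (X i ω) - ∫ ω', f (X i ω') ∂μ)} := by
    ext ω
    simp only [Set.mem_ofPred_eq, mul_sub, sum_sub_distrib, sum_mul_empiricalFreq,
      integral_comp_eq_sum_of_map_eq (hX _) (hdist _), sum_const, card_univ, Fintype.card_fin,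
      nsmul_eq_mul]
    rw [le_sub_iff_add_le, le_div_iff₀ hn']
    constructor <;> intro h <;> linarith
  have hhoeffding := measureReal_sum_sub_integral_ge_le_of_abs_le_one
    (fun i ↦ (measurable_of_finite f).comp (hX i))
    (hindep.comp (fun _ ↦ f) fun _ ↦ measurable_of_finite f) (fun i ω ↦ hf (X i ω))
    (mul_nonneg hn'.le hε)
  rw [hevent, ← ofReal_measureReal]
  refine ENNReal.ofReal_le_ofReal (hhoeffding.trans_eq ?_)
  rw [Fintype.card_fin]
  field_simp

lemma measure_sum_abs_empiricalFreq_sub_ge_le (hn : 0 < n) (hX : ∀ i, Measurable (X i))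
    (hindep : iIndepFun X μ) (hdist : ∀ i, μ.map (X i) = Q) {ε : ℝ} (hε : 0 ≤ ε) :
    μ {ω | ε ≤ ∑ s, |empiricalFreq X ω s - Q.real {s}|} ≤
      2 ^ Fintype.card α * ENNReal.ofReal (exp (-(n * ε ^ 2) / 2)) := by
  let E (σ : α → Bool) : Set Ω :=
    {ω | ε ≤ ∑ s, (if σ s then 1 else -1) * (empiricalFreq X ω s - Q.real {s})}
  calc μ {ω | ε ≤ ∑ s, |empiricalFreq X ω s - Q.real {s}|}
      ≤ μ (⋃ σ, E σ) := by
        refine measure_mono fun ω hω ↦ Set.mem_iUnion.2 ?_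
        obtain ⟨σ, hσ⟩ := exists_sum_abs_eq_sum_sign_mul fun s ↦ empiricalFreq X ω s - Q.real {s}
        exact ⟨σ, show ε ≤ _ from hσ ▸ hω⟩
    _ ≤ ∑ σ, μ (E σ) := measure_iUnion_fintype_le μ E
    _ ≤ ∑ _σ : α → Bool, ENNReal.ofReal (exp (-(n * ε ^ 2) / 2)) :=
        sum_le_sum fun σ _ ↦ measure_sum_mul_empiricalFreq_sub_ge_le hn hX hindep hdist
          (fun s ↦ by split <;> simp) hε
    _ = 2 ^ Fintype.card α * ENNReal.ofReal (exp (-(n * ε ^ 2) / 2)) := by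
        simp

end Empirical

/-- **Weissman et al. concentration inequality.**  Let `Q` be a probability distribution
on `[S]`, let `X₁, …, Xₙ` be i.i.d. with law `Q`, and let `Q̂ₙ` be the empirical
distribution `Q̂ₙ(s) = (1/n)·Σ_{t} 1{X_t = s}`.  Then for any `δ > 0`,
`P(‖Q̂ₙ − Q‖₁ ≥ √(2S log(2/δ)/n)) ≤ δ`. -/
theorem weissman_l1_concentration
    (S n : ℕ) (hS : 1 ≤ S) (hn : 1 ≤ n)
    (Ω : Type) [MeasurableSpace Ω] (μ : Measure Ω) [IsProbabilityMeasure μ]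
    (Q : Measure (Fin S)) [IsProbabilityMeasure Q]
    (X : Fin n → Ω → Fin S)
    (hmeas : ∀ i, Measurable (X i))
    (hindep : iIndepFun X μ)
    (hdist : ∀ i, μ.map (X i) = Q)
    (δ : ℝ) (hδ : 0 < δ) :
    μ {ω | Real.sqrt (2 * S * Real.log (2 / δ) / n) ≤
        ∑ s : Fin S,
          |(∑ i : Fin n, if X i ω = s then (1 : ℝ) else 0) / n - (Q {s}).toReal|} ≤
      ENNReal.ofReal δ := by
  rcases le_or_gt 1 δ with hδ1 | hδ1
  · exact prob_le_one.trans (ENNReal.one_le_ofReal.2 hδ1)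
  calc _ ≤ 2 ^ Fintype.card (Fin S) *
        ENNReal.ofReal (exp (-(n * sqrt (2 * S * log (2 / δ) / n) ^ 2) / 2)) :=
        measure_sum_abs_empiricalFreq_sub_ge_le hn hmeas hindep hdist (sqrt_nonneg _)
    _ = ENNReal.ofReal (2 ^ S * exp (-(n * sqrt (2 * S * log (2 / δ) / n) ^ 2) / 2)) := by
        rw [Fintype.card_fin, ENNReal.ofReal_mul (by positivity), ENNReal.ofReal_pow zero_le_two,
          ENNReal.ofReal_ofNat]
    _ ≤ ENNReal.ofReal δ :=
        ENNReal.ofReal_le_ofReal (two_pow_mul_exp_neg_mul_sq_sqrt_le hS hn hδ hδ1.le)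
end

section
/- Let K ≥ 1 and W ≥ 1 be integers and let a₁, a₂, …, a_W be any sequence taking values in a set of size K. For each t ∈ [W] define N_t = max{1, #{u < t : a_u = a_t}}, the number of previous occurrences of the value a_t (floored at 1). Then Σ_{t=1}^W 1/√(N_t) ≤ 2·√(K·(W+1)). -/
/-! Group the times `t` by the value `k = a t`. Inside the fibre of `k`, of size `n k`, the
number of earlier occurrences of `k` is the rank of `t` in the fibre, so these counts run exactly
through `0, …, n k - 1` and the fibre contributes `∑_{j < n k} 1/√(max 1 j) ≤ 2√(n k)`
(telescoping `1/√(x+1) ≤ 2(√(x+1) - √x)`). Cauchy–Schwarz then gives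
`∑_k √(n k) ≤ √(K ∑_k n k) = √(K W)`. -/

namespace Finset

variable {α M : Type*} [LinearOrder α]

theorem strictMonoOn_card_filter_lt (s : Finset α) :
    StrictMonoOn (fun t => #{u ∈ s | u < t}) s := by
  intro t ht t' _ htt'
  refine card_lt_card ((ssubset_iff_of_subset ?_).2 ⟨t, ?_, ?_⟩)
  · exact monotone_filter_right s fun _ _ hu => hu.trans htt'
  · simpa [htt'] using ht
  · simp

theorem card_filter_lt_lt_card {s : Finset α} {t : α} (ht : t ∈ s) : #{u ∈ s | u < t} < #s :=
  card_lt_card (filter_ssubset.2 ⟨t, ht, lt_irrefl t⟩)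

theorem image_card_filter_lt (s : Finset α) :
    s.image (fun t => #{u ∈ s | u < t}) = range #s := by
  refine eq_of_subset_of_card_le (fun j hj => ?_) ?_
  · obtain ⟨t, ht, rfl⟩ := mem_image.1 hj
    exact mem_range.2 (card_filter_lt_lt_card ht)
  · rw [card_range, card_image_of_injOn (strictMonoOn_card_filter_lt s).injOn]

theorem sum_comp_card_filter_lt [AddCommMonoid M] (s : Finset α) (g : ℕ → M) :
    ∑ t ∈ s, g #{u ∈ s | u < t} = ∑ j ∈ range #s, g j := by
  rw [← image_card_filter_lt, sum_image (strictMonoOn_card_filter_lt s).injOn]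

theorem sum_comp_card_filter_lt_fiberwise {β : Type*} [Fintype β] [DecidableEq β]
    [AddCommMonoid M] (s : Finset α) (f : α → β) (g : ℕ → M) :
    ∑ t ∈ s, g #{u ∈ s | u < t ∧ f u = f t} = ∑ b, ∑ j ∈ range #{t ∈ s | f t = b}, g j := by
  rw [← sum_fiberwise s f]
  refine sum_congr rfl fun b _ => ?_
  rw [← sum_comp_card_filter_lt]
  refine sum_congr rfl fun t ht => ?_
  rw [filter_filter, (mem_filter.1 ht).2]
  simp only [and_comm]

end Finset

open Finset

namespace Real

theorem one_div_sqrt_add_one_le {x : ℝ} (hx : 0 ≤ x) : 1 / √(x + 1) ≤ 2 * (√(x + 1) - √x) := by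
  have hpos : 0 < √(x + 1) := sqrt_pos.2 (by linarith)
  have hmono : √x ≤ √(x + 1) := sqrt_le_sqrt (by linarith)
  rw [div_le_iff₀ hpos]
  nlinarith [sq_sqrt hx, sq_sqrt (by linarith : 0 ≤ x + 1), sq_nonneg (√(x + 1) - √x)]

theorem sum_range_succ_one_div_sqrt_max_one_le {n : ℕ} (hn : 1 ≤ n) :
    ∑ j ∈ range (n + 1), 1 / √(max 1 (j : ℝ)) ≤ 2 * √n := by
  induction n, hn using Nat.le_induction with
  | base => norm_num [sum_range_succ]
  | succ n _ ih =>
    rw [sum_range_succ, Nat.cast_add_one, max_eq_right (by linarith [n.cast_nonneg (α := ℝ)])]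
    linarith [one_div_sqrt_add_one_le n.cast_nonneg]

theorem sum_range_one_div_sqrt_max_one_le (n : ℕ) :
    ∑ j ∈ range n, 1 / √(max 1 (j : ℝ)) ≤ 2 * √n := by
  match n with
  | 0 => simp
  | 1 => norm_num
  | n + 2 =>
    calc _ ≤ 2 * √(n + 1 : ℕ) := sum_range_succ_one_div_sqrt_max_one_le (Nat.le_add_left 1 n)
      _ ≤ 2 * √(n + 2 : ℕ) := by gcongr; omega

end Real

open Real

theorem sum_inv_sqrt_window_counts_general (K W : ℕ) (a : ℕ → Fin K) :
    ∑ t ∈ Finset.Icc 1 W,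
        (1 : ℝ) /
          Real.sqrt (max 1 (((Finset.Icc 1 (t - 1)).filter fun u => a u = a t).card)) ≤
      2 * Real.sqrt ((K : ℝ) * ((W : ℝ) + 1)) := by
  set n : Fin K → ℕ := fun k => #{t ∈ Icc 1 W | a t = k}
  have hprev : ∀ t ∈ Icc 1 W,
      {u ∈ Icc 1 (t - 1) | a u = a t} = {u ∈ Icc 1 W | u < t ∧ a u = a t} := by
    intro t ht
    ext u
    simp only [mem_filter, mem_Icc] at ht ⊢
    grind
  have hn : ∑ k, (n k : ℝ) = W := by
    rw [← Nat.cast_sum, ← card_eq_sum_card_fiberwise fun t _ => mem_univ (a t), Nat.card_Icc,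
      Nat.add_sub_cancel]
  calc _ = ∑ k, ∑ j ∈ range (n k), 1 / √(max 1 (j : ℝ)) := by
        rw [← sum_comp_card_filter_lt_fiberwise]
        exact sum_congr rfl fun t ht => by rw [hprev t ht]
    _ ≤ ∑ k, 2 * (√1 * √(n k)) := by
        simpa using sum_le_sum fun k _ => sum_range_one_div_sqrt_max_one_le (n k)
    _ ≤ 2 * (√(∑ k : Fin K, 1) * √(∑ k, (n k : ℝ))) := by
        rw [← mul_sum]
        gcongr
        exact sum_sqrt_mul_sqrt_le _ (fun _ => zero_le_one) fun _ => Nat.cast_nonneg _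
    _ ≤ 2 * √(K * (W + 1)) := by
        rw [hn, ← sqrt_mul (by positivity)]
        gcongr <;> simp

/-- **Windowed-count summation bound (Eq. (8) of the paper).**  Let `a₁, …, a_W` take
values in a set of size `K`, and for `t ∈ [W]` let
`N_t = max{1, #{u < t : a_u = a_t}}` be the number of previous occurrences of `a_t`
(floored at `1`).  Then `Σ_{t=1}^W 1/√N_t ≤ 2√(K(W+1))`. -/
theorem sum_inv_sqrt_window_counts (K W : ℕ) (hK : 1 ≤ K) (hW : 1 ≤ W)
    (a : ℕ → Fin K) :
    ∑ t ∈ Finset.Icc 1 W,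
        (1 : ℝ) /
          Real.sqrt (max 1 (((Finset.Icc 1 (t - 1)).filter fun u => a u = a t).card)) ≤
      2 * Real.sqrt ((K : ℝ) * ((W : ℝ) + 1)) :=
  sum_inv_sqrt_window_counts_general K W a
end

section
/- Consider an NSD bandit problem run with NSD-UCRL2 with window W and confidence δ ∈ (0,1). Fix ε > 0 and 0 < Δ < ε, and fix a round t ∈ [T]. Suppose that at round t: (i) θ_s ≤ U_t(s) for all s ∈ [S]; (ii) ‖p̃_t(A_t) − p_t(·|A_t)‖₁ ≤ 2·√(C_{W,T,δ}/N^W_t(A_t)) and p_t(·|a*_t) lies in the constraint set { q ∈ Δ_S : ‖p̂_t(a*_t) − q‖₁ ≤ √(C_{W,T,δ}/N^W_t(a*_t)) }; (iii) the action A_t chosen by the algorithm is ε-bad at round t; and (iv) |U_t(s) − θ_s| ≤ Δ for every s ∈ [S] with p_t(s|A_t) > 0. Then N^W_t(A_t) ≤ C_{W,T,δ}/(ε − Δ)². -/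
/-!
Optimism chains the true value of the optimal action to the index of the chosen one:
`ρ_t(a*) ≤ p_t(a*)ᵀU_t ≤ ρ⁺_t(a*) ≤ ρ⁺_t(A_t) = p̃ᵀU_t`. Splitting `p̃ᵀU_t` as
`p_t(A_t)ᵀU_t + (p̃ − p_t(A_t))ᵀU_t`, the first term is at most `ρ_t(A_t) + Δ` by (iv), and,
since `p̃ − p_t(A_t)` sums to zero and `U_t ∈ [0,1]`, the second is at most half its `ℓ¹` norm,
hence at most `√(C_{W,T,δ}/N^W_t(A_t))`. With (iii) this gives
`ε − Δ ≤ √(C_{W,T,δ}/N^W_t(A_t))`, which is the claim squared.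
-/

open MeasureTheory ProbabilityTheory Finset

noncomputable section

/-- `C_{T,δ} = 2 log(2TS/δ)`. -/
def CTdelta (T S : ℕ) (δ : ℝ) : ℝ := 2 * Real.log (2 * T * S / δ)

/-- `C_{W,T,δ} = 2 S log(KWT/δ)`. -/
def CWdelta (K W T S : ℕ) (δ : ℝ) : ℝ := 2 * S * Real.log (K * W * T / δ)

/-- A stochastic-process model of a non-stationary delayed (NSD) bandit problem with
horizon `T`, `K ≥ 2` actions, `S ≥ 2` intermediate outcomes and constant delay `D > 0`.
Rounds are indexed by `t ∈ {1, …, T}`.  `F t` is the information available to the learner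
at the beginning of round `t` (past actions, past signals, and rewards already revealed),
together with the action `A t` chosen at round `t`. -/
structure NSDSetup (T K S D : ℕ) (Ω : Type) [MeasurableSpace Ω] (μ : Measure Ω) where
  hK : 2 ≤ K
  hS : 2 ≤ S
  hD : 1 ≤ D
  /-- information σ-algebra at round `t` (including the chosen action `A t`) -/
  F : ℕ → MeasurableSpace Ω
  F_le : ∀ t, F t ≤ ‹MeasurableSpace Ω›
  F_mono : Monotone F
  /-- action played at round `t` -/
  A : ℕ → Ω → Fin K
  /-- intermediate signal observed (without delay) at round `t` -/
  Sig : ℕ → Ω → Fin S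
  /-- reward generated at round `t` (revealed only at round `t + D`), with values in `[0,1]` -/
  R : ℕ → Ω → ℝ
  /-- transition probabilities: `p t a s` is `p_t(s|a)` -/
  p : ℕ → Fin K → Fin S → ℝ
  /-- fixed mean rewards of the signals -/
  θ : Fin S → ℝ
  p_mem : ∀ t a, p t a ∈ stdSimplex ℝ (Fin S)
  θ_mem : ∀ s, θ s ∈ Set.Icc (0 : ℝ) 1
  R_mem : ∀ t ω, R t ω ∈ Set.Icc (0 : ℝ) 1
  A_meas : ∀ t, Measurable[F t] (A t)
  Sig_meas : ∀ t, Measurable (Sig t)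
  R_meas : ∀ t, Measurable (R t)
  /-- past actions are part of the available information -/
  histA_meas : ∀ u t, u < t → Measurable[F t] (A u)
  /-- past signals are observed without delay -/
  histSig_meas : ∀ u t, u < t → Measurable[F t] (Sig u)
  /-- the reward of round `u` is revealed (only) `D` rounds later -/
  histR_meas : ∀ u t, u + D < t → Measurable[F t] (R u)
  /-- the signal of round `t` is drawn from `p t (A t)`, conditionally on the past -/
  sig_dist : ∀ t s,
    (μ[(fun ω => if Sig t ω = s then (1 : ℝ) else 0) | F t]) =ᵐ[μ]
      fun ω => p t (A t ω) s
  /-- given the past and the signal `Sig t`, the reward `R t` has conditional mean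
  `θ (Sig t)`; in particular it is conditionally mean-independent of the action -/
  rew_mean : ∀ t,
    (μ[R t | (F t) ⊔ MeasurableSpace.comap (Sig t) ⊤]) =ᵐ[μ] fun ω => θ (Sig t ω)

namespace NSDSetup

variable {T K S D : ℕ} {Ω : Type} [MeasurableSpace Ω] {μ : Measure Ω}

/-- windowed action counts `N^W_t(a) = max{1, Σ_{u=(t−W)⁺}^{t−1} 1{A_u = a}}` -/
def NW (M : NSDSetup T K S D Ω μ) (W t : ℕ) (a : Fin K) (ω : Ω) : ℕ :=
  max 1 (∑ u ∈ Finset.Ico (max 1 (t - W)) t, if M.A u ω = a then 1 else 0)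

/-- windowed transition estimate `p̂_t(s|a)` -/
def phat (M : NSDSetup T K S D Ω μ) (W t : ℕ) (a : Fin K) (s : Fin S) (ω : Ω) : ℝ :=
  (∑ u ∈ Finset.Ico (max 1 (t - W)) t, if M.A u ω = a ∧ M.Sig u ω = s then (1 : ℝ) else 0)
    / (M.NW W t a ω)

/-- delayed signal counts `N^D_t(s) = max{1, Σ_{u < t−D} 1{S_u = s}}` -/
def ND (M : NSDSetup T K S D Ω μ) (t : ℕ) (s : Fin S) (ω : Ω) : ℕ :=
  max 1 (∑ u ∈ Finset.Ico 1 (t - D), if M.Sig u ω = s then 1 else 0)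

/-- delayed empirical reward estimate `θ̂_t(s)` -/
def thetahat (M : NSDSetup T K S D Ω μ) (t : ℕ) (s : Fin S) (ω : Ω) : ℝ :=
  (∑ u ∈ Finset.Ico 1 (t - D), if M.Sig u ω = s then M.R u ω else 0) / (M.ND t s ω)

/-- upper confidence value `U_t(s) = min{1, θ̂_t(s) + √(C_{T,δ}/N^D_t(s))}` -/
def Ubd (M : NSDSetup T K S D Ω μ) (δ : ℝ) (t : ℕ) (s : Fin S) (ω : Ω) : ℝ :=
  min 1 (M.thetahat t s ω + Real.sqrt (CTdelta T S δ / M.ND t s ω))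

/-- optimistic index
`ρ⁺_t(a) = max{ qᵀU_t : q ∈ Δ_S, ‖p̂_t(a) − q‖₁ ≤ √(C_{W,T,δ}/N^W_t(a)) }` -/
def rhoPlus (M : NSDSetup T K S D Ω μ) (W : ℕ) (δ : ℝ) (t : ℕ) (a : Fin K) (ω : Ω) : ℝ :=
  sSup {x : ℝ | ∃ q ∈ stdSimplex ℝ (Fin S),
    (∑ s, |M.phat W t a s ω - q s|) ≤ Real.sqrt (CWdelta K W T S δ / M.NW W t a ω) ∧
    x = ∑ s, q s * M.Ubd δ t s ω}

/-- expected reward `ρ_t(a) = Σ_s p_t(s|a) θ_s` -/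
def rho (M : NSDSetup T K S D Ω μ) (t : ℕ) (a : Fin K) : ℝ := ∑ s, M.p t a s * M.θ s

/-- optimal expected reward `ρ*_t = max_a ρ_t(a)` -/
def rhoStar (M : NSDSetup T K S D Ω μ) (t : ℕ) : ℝ :=
  haveI : Nonempty (Fin K) := Fin.pos_iff_nonempty.mp (by have := M.hK; omega)
  Finset.univ.sup' Finset.univ_nonempty (M.rho t)

/-- dynamic regret `R(T) = Σ_{t=1}^T (ρ*_t − ρ_t(A_t))` -/
def Regret (M : NSDSetup T K S D Ω μ) (ω : Ω) : ℝ :=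
  ∑ t ∈ Finset.Icc 1 T, (M.rhoStar t - M.rho t (M.A t ω))

/-- the number of rounds within the horizon at which the transition probabilities change -/
def numSwitches (M : NSDSetup T K S D Ω μ) : ℕ :=
  ((Finset.Icc 2 T).filter (fun t => M.p t ≠ M.p (t - 1))).card

/-- The trajectory is generated by the `NSD-UCRL2` algorithm with window size `W` and
confidence parameter `δ`: each action is pulled once during the first `K` rounds, and from
round `K+1` on the action maximizing the optimistic index `ρ⁺_t` is played. -/
def IsNSDUCRL2 (M : NSDSetup T K S D Ω μ) (W : ℕ) (δ : ℝ) : Prop :=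
  (∀ ω : Ω, ∀ a : Fin K, ∃ t ∈ Finset.Icc 1 K, M.A t ω = a) ∧
  ∀ ω : Ω, ∀ t ∈ Finset.Icc (K + 1) T, ∀ a : Fin K,
    M.rhoPlus W δ t a ω ≤ M.rhoPlus W δ t (M.A t ω) ω

end NSDSetup

section SimplexInequalities

variable {ι : Type*} [Fintype ι]

/-- Testing a zero-sum vector against a function with values in `[a, b]` loses only half
of the oscillation `b - a`, because the test function may be recentred at `(a + b) / 2`. -/
theorem sum_sub_mul_le_of_sum_eq_of_mem_Icc {p q U : ι → ℝ} {a b : ℝ}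
    (hsum : ∑ i, q i = ∑ i, p i) (hU : ∀ i, U i ∈ Set.Icc a b) :
    ∑ i, (q i - p i) * U i ≤ (b - a) / 2 * ∑ i, |q i - p i| := by
  have hterm : ∀ i, (q i - p i) * U i ≤
      (q i - p i) * ((a + b) / 2) + (b - a) / 2 * |q i - p i| := by
    intro i
    have hcentre : |U i - (a + b) / 2| ≤ (b - a) / 2 :=
      abs_le.2 ⟨by linarith [(hU i).1], by linarith [(hU i).2]⟩
    have hdev : (q i - p i) * (U i - (a + b) / 2) ≤ (b - a) / 2 * |q i - p i| :=
      calc (q i - p i) * (U i - (a + b) / 2)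
          ≤ |q i - p i| * |U i - (a + b) / 2| := (le_abs_self _).trans (abs_mul _ _).le
        _ ≤ |q i - p i| * ((b - a) / 2) := by gcongr
        _ = (b - a) / 2 * |q i - p i| := mul_comm _ _
    linarith
  have hzero : ∑ i, (q i - p i) = 0 := by rw [sum_sub_distrib, hsum, sub_self]
  calc ∑ i, (q i - p i) * U i
      ≤ ∑ i, ((q i - p i) * ((a + b) / 2) + (b - a) / 2 * |q i - p i|) :=
        sum_le_sum fun i _ => hterm i
    _ = (b - a) / 2 * ∑ i, |q i - p i| := by
        rw [sum_add_distrib, ← sum_mul, ← mul_sum, hzero, zero_mul, zero_add]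

theorem sum_mul_le_sum_mul_add_of_pos {p f g : ι → ℝ} {c : ℝ} (hp : p ∈ stdSimplex ℝ ι)
    (hfg : ∀ i, 0 < p i → f i ≤ g i + c) :
    ∑ i, p i * f i ≤ ∑ i, p i * g i + c := by
  have hterm : ∀ i, p i * f i ≤ p i * g i + p i * c := by
    intro i
    rcases (hp.1 i).eq_or_lt with hzero | hpos
    · simp [← hzero]
    · rw [← mul_add]
      exact mul_le_mul_of_nonneg_left (hfg i hpos) hpos.le
  calc ∑ i, p i * f i ≤ ∑ i, (p i * g i + p i * c) := sum_le_sum fun i _ => hterm i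
    _ = ∑ i, p i * g i + c := by rw [sum_add_distrib, ← sum_mul, hp.2, one_mul]

end SimplexInequalities

theorem le_div_sq_of_le_sqrt_div {x N C : ℝ} (hx : 0 < x) (hN : 0 < N) (h : x ≤ √(C / N)) :
    N ≤ C / x ^ 2 := by
  rw [Real.le_sqrt' hx, le_div_iff₀ hN] at h
  rw [le_div_iff₀ (by positivity)]
  linarith

namespace NSDSetup

variable {T K S D : ℕ} {Ω : Type} [MeasurableSpace Ω] {μ : Measure Ω}
  (M : NSDSetup T K S D Ω μ) {W : ℕ} {δ : ℝ} {t : ℕ} {ω : Ω}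

theorem one_le_NW (a : Fin K) : 1 ≤ M.NW W t a ω := le_max_left _ _

theorem thetahat_nonneg (s : Fin S) : 0 ≤ M.thetahat t s ω :=
  div_nonneg (sum_nonneg fun u _ => by split_ifs <;> simp [(M.R_mem u ω).1]) (Nat.cast_nonneg _)

theorem Ubd_mem_Icc (s : Fin S) : M.Ubd δ t s ω ∈ Set.Icc 0 1 :=
  ⟨le_min zero_le_one (add_nonneg (M.thetahat_nonneg s) (Real.sqrt_nonneg _)), min_le_left _ _⟩

/-- `ρ⁺_t` is an `sSup`, which is junk unless the set is bounded above;
`U_t ≤ 1` bounds it by `1`. -/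
theorem sum_mul_Ubd_le_rhoPlus {a : Fin K} {r : Fin S → ℝ} (hr : r ∈ stdSimplex ℝ (Fin S))
    (hfeas : ∑ s, |M.phat W t a s ω - r s| ≤ √(CWdelta K W T S δ / M.NW W t a ω)) :
    ∑ s, r s * M.Ubd δ t s ω ≤ M.rhoPlus W δ t a ω := by
  refine le_csSup ⟨1, ?_⟩ ⟨r, hr, hfeas, rfl⟩
  rintro x ⟨r', hr', -, rfl⟩
  calc ∑ s, r' s * M.Ubd δ t s ω ≤ ∑ s, r' s * 1 :=
        sum_le_sum fun s _ => mul_le_mul_of_nonneg_left (M.Ubd_mem_Icc s).2 (hr'.1 s)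
    _ = 1 := by simp [hr'.2]

theorem rho_le_rhoPlus {a : Fin K} (hU : ∀ s, M.θ s ≤ M.Ubd δ t s ω)
    (hfeas : ∑ s, |M.phat W t a s ω - M.p t a s| ≤ √(CWdelta K W T S δ / M.NW W t a ω)) :
    M.rho t a ≤ M.rhoPlus W δ t a ω :=
  (sum_le_sum fun s _ => mul_le_mul_of_nonneg_left (hU s) ((M.p_mem t a).1 s)).trans
    (M.sum_mul_Ubd_le_rhoPlus (M.p_mem t a) hfeas)

theorem sum_mul_Ubd_le_rho_add {a : Fin K} {q : Fin S → ℝ} {Δ : ℝ}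
    (hq : q ∈ stdSimplex ℝ (Fin S))
    (hUΔ : ∀ s, 0 < M.p t a s → |M.Ubd δ t s ω - M.θ s| ≤ Δ) :
    ∑ s, q s * M.Ubd δ t s ω ≤ M.rho t a + Δ + (∑ s, |q s - M.p t a s|) / 2 := by
  have hsplit : ∑ s, q s * M.Ubd δ t s ω =
      ∑ s, M.p t a s * M.Ubd δ t s ω + ∑ s, (q s - M.p t a s) * M.Ubd δ t s ω := by
    rw [← sum_add_distrib]
    exact sum_congr rfl fun s _ => by ring
  have hmain : ∑ s, M.p t a s * M.Ubd δ t s ω ≤ M.rho t a + Δ :=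
    sum_mul_le_sum_mul_add_of_pos (M.p_mem t a) fun s hs => by
      linarith [(abs_le.1 (hUΔ s hs)).2]
  have hcross := sum_sub_mul_le_of_sum_eq_of_mem_Icc (hq.2.trans (M.p_mem t a).2.symm)
    fun s => M.Ubd_mem_Icc (t := t) (ω := ω) (δ := δ) s
  linarith

end NSDSetup

theorem nsd_ucrl2_bad_action_count_key_general
    (T K S D W : ℕ) (Ω : Type) [MeasurableSpace Ω] (μ : Measure Ω)
    (M : NSDSetup T K S D Ω μ) (δ ε Δ : ℝ)
    (t : ℕ) (ω : Ω) (aStar : Fin K) (q : Fin S → ℝ)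
    (hΔε : Δ < ε)
    (ht : t ∈ Finset.Icc (K + 1) T)
    (halg : M.IsNSDUCRL2 W δ)
    -- (i)
    (hU : ∀ s : Fin S, M.θ s ≤ M.Ubd δ t s ω)
    -- (ii): `q = p̃_t(A_t)` is the maximizer defining `ρ⁺_t(A_t)` …
    (hq_simplex : q ∈ stdSimplex ℝ (Fin S))
    (hq_max : M.rhoPlus W δ t (M.A t ω) ω = ∑ s, q s * M.Ubd δ t s ω)
    -- … `‖p̃_t(A_t) − p_t(·|A_t)‖₁ ≤ 2√(C_{W,T,δ}/N^W_t(A_t))` …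
    (hq_close : (∑ s, |q s - M.p t (M.A t ω) s|) ≤
        2 * Real.sqrt (CWdelta K W T S δ / M.NW W t (M.A t ω) ω))
    -- … and `p_t(·|a*_t)` lies in the constraint set of `ρ⁺_t(a*_t)`
    (hstar_feas : (∑ s, |M.phat W t aStar s ω - M.p t aStar s|) ≤
        Real.sqrt (CWdelta K W T S δ / M.NW W t aStar ω))
    -- (iii): the chosen action is `ε`-bad at round `t`
    (hbad : ε ≤ M.rho t aStar - M.rho t (M.A t ω))
    -- (iv)
    (hUΔ : ∀ s : Fin S, 0 < M.p t (M.A t ω) s → |M.Ubd δ t s ω - M.θ s| ≤ Δ) :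
    (M.NW W t (M.A t ω) ω : ℝ) ≤ CWdelta K W T S δ / (ε - Δ) ^ 2 := by
  have optimism : M.rho t aStar ≤ ∑ s, q s * M.Ubd δ t s ω :=
    hq_max ▸ (M.rho_le_rhoPlus hU hstar_feas).trans (halg.2 ω t ht aStar)
  have hchosen := M.sum_mul_Ubd_le_rho_add hq_simplex hUΔ
  refine le_div_sq_of_le_sqrt_div (sub_pos.2 hΔε) ?_ (by linarith)
  exact_mod_cast M.one_le_NW (M.A t ω)

/-- **Key step of the proof of Theorem 3.**  Fix a round `t` at which `NSD-UCRL2` acts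
greedily.  Suppose that at round `t` (for the realization `ω`):
(i) `θ_s ≤ U_t(s)` for every signal `s`;
(ii) the maximizer `q = p̃_t(A_t)` of the optimistic index of the chosen action satisfies
`‖q − p_t(·|A_t)‖₁ ≤ 2√(C_{W,T,δ}/N^W_t(A_t))`, and the true transition vector
`p_t(·|a*_t)` of the optimal action lies in the constraint set of `ρ⁺_t(a*_t)`;
(iii) the chosen action `A_t` is `ε`-bad; and
(iv) `|U_t(s) − θ_s| ≤ Δ` for every `s` with `p_t(s|A_t) > 0`.
Then `N^W_t(A_t) ≤ C_{W,T,δ}/(ε − Δ)²`. -/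
theorem nsd_ucrl2_bad_action_count_key
    (T K S D W : ℕ) (Ω : Type) [MeasurableSpace Ω] (μ : Measure Ω)
    [IsProbabilityMeasure μ] (M : NSDSetup T K S D Ω μ) (δ ε Δ : ℝ)
    (t : ℕ) (ω : Ω) (aStar : Fin K) (q : Fin S → ℝ)
    (hδ0 : 0 < δ) (hδ1 : δ < 1) (hW : 1 ≤ W)
    (hΔ0 : 0 < Δ) (hΔε : Δ < ε)
    (ht : t ∈ Finset.Icc (K + 1) T)
    (halg : M.IsNSDUCRL2 W δ)
    -- `aStar = a*_t` is the optimal action at round `t`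
    (hopt : ∀ a : Fin K, M.rho t a ≤ M.rho t aStar)
    -- (i)
    (hU : ∀ s : Fin S, M.θ s ≤ M.Ubd δ t s ω)
    -- (ii): `q = p̃_t(A_t)` is the maximizer defining `ρ⁺_t(A_t)` …
    (hq_simplex : q ∈ stdSimplex ℝ (Fin S))
    (hq_feas : (∑ s, |M.phat W t (M.A t ω) s ω - q s|) ≤
        Real.sqrt (CWdelta K W T S δ / M.NW W t (M.A t ω) ω))
    (hq_max : M.rhoPlus W δ t (M.A t ω) ω = ∑ s, q s * M.Ubd δ t s ω)
    -- … `‖p̃_t(A_t) − p_t(·|A_t)‖₁ ≤ 2√(C_{W,T,δ}/N^W_t(A_t))` …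
    (hq_close : (∑ s, |q s - M.p t (M.A t ω) s|) ≤
        2 * Real.sqrt (CWdelta K W T S δ / M.NW W t (M.A t ω) ω))
    -- … and `p_t(·|a*_t)` lies in the constraint set of `ρ⁺_t(a*_t)`
    (hstar_feas : (∑ s, |M.phat W t aStar s ω - M.p t aStar s|) ≤
        Real.sqrt (CWdelta K W T S δ / M.NW W t aStar ω))
    -- (iii): the chosen action is `ε`-bad at round `t`
    (hbad : ε ≤ M.rho t aStar - M.rho t (M.A t ω))
    -- (iv)
    (hUΔ : ∀ s : Fin S, 0 < M.p t (M.A t ω) s → |M.Ubd δ t s ω - M.θ s| ≤ Δ) :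
    (M.NW W t (M.A t ω) ω : ℝ) ≤ CWdelta K W T S δ / (ε - Δ) ^ 2 :=
  nsd_ucrl2_bad_action_count_key_general T K S D W Ω μ M δ ε Δ t ω aStar q hΔε ht halg hU hq_simplex
    hq_max hq_close hstar_feas hbad hUΔ
end
end
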